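/- arXiv:2009.02272 — 3 statements merged into one kernel-verified Lean document; each statement's English description precedes it below -/
import Mathlib

section
/- For every natural number n ≥ 1 and every k with 1 ≤ k ≤ n, the identity p^B_{n,k}(x) = (1−x)^{n+1} · Σ_{m≥0} (4m)(2m−1)^{k−1}(2m+1)^{n−k} x^m holds in the ring of formal power series ℝ⟦x⟧ (where the polynomial p^B_{n,k} is regarded as a power series). -/
open PowerSeries

/-- The polynomials `p^B_{n,k}` defined recursively as in
Proposition (e): `p^B_{0,0} = 1`, `p^B_{0,1} = x`,
`p^B_{n+1,0} = ∑_{i=0}^{n+1} p^B_{n,i}`,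
`p^B_{n+1,k} = 2x ∑_{i=0}^{k-1} p^B_{n,i} + 2 ∑_{i=k}^{n+1} p^B_{n,i}` for `1 ≤ k ≤ n+1`, and
`p^B_{n+1,n+2} = x ∑_{i=0}^{n+1} p^B_{n,i}`. -/
noncomputable def pB : ℕ → ℕ → Polynomial ℝ
  | 0, 0 => 1
  | 0, 1 => Polynomial.X
  | 0, _ + 2 => 0
  | n + 1, 0 => ∑ i ∈ Finset.range (n + 2), pB n i
  | n + 1, k + 1 =>
      if k + 1 ≤ n + 1 then
        2 * Polynomial.X * (∑ i ∈ Finset.range (k + 1), pB n i) +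
          2 * ∑ i ∈ Finset.Icc (k + 1) (n + 1), pB n i
      else if k + 1 = n + 2 then
        Polynomial.X * ∑ i ∈ Finset.range (n + 2), pB n i
      else 0
  termination_by n _ => n

/-!
Write `u = 2m + 1` and `v = 2m - 1`, so `u - v = 2` and `u + v = 4m`, and let `c_{n,k}(m)` be the
claimed coefficient sequence of `p^B_{n,k} / (1 - x)^{n+1}` (with `c_{n,0} = u^n` and
`c_{n,n+1} = v^n` for `m ≥ 1`). Its partial sums over `k` telescope to
`∑_{i<k} c_{n,i} = u^{n+1} - 2m u^{n+1-k} v^{k-1}`, and the full row sum is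
`u^{n+1} - v^{n+1} = c_{n+1,0} - c_{n+1,n+2}`. Multiplying by `1 - x` takes first differences in
`m`, and since `u(m - 1) = v(m)`, the recursion defining row `n + 1` becomes a polynomial
identity in `m` between these closed forms; induction on `n` finishes the proof.
-/

theorem pB_zero_zero : pB 0 0 = 1 := by
  rw [pB]

theorem pB_zero_one : pB 0 1 = Polynomial.X := by
  rw [pB]

theorem pB_succ_zero (n : ℕ) : pB (n + 1) 0 = ∑ i ∈ Finset.range (n + 2), pB n i := by
  rw [pB]

theorem pB_succ_of_pos_of_le {n k : ℕ} (hk0 : 0 < k) (hk : k ≤ n + 1) :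
    pB (n + 1) k = 2 * Polynomial.X * ∑ i ∈ Finset.range k, pB n i +
      2 * (∑ i ∈ Finset.range (n + 2), pB n i - ∑ i ∈ Finset.range k, pB n i) := by
  obtain ⟨k, rfl⟩ := Nat.exists_eq_add_of_le' hk0
  rw [pB, if_pos hk, ← Finset.Ico_add_one_right_eq_Icc, Finset.sum_Ico_eq_sub _ (by omega)]
  rfl

theorem pB_succ_succ_self (n : ℕ) :
    pB (n + 1) (n + 2) = Polynomial.X * ∑ i ∈ Finset.range (n + 2), pB n i := by
  rw [pB]
  simp

-- The sequence `c_{n,k}` above, for `k ≤ n + 1`; in the last branch (`k = n + 1`) the value at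
-- `m = 0` is `0`, not `(-1)^n`.
noncomputable def pBCoeff (n k m : ℕ) : ℝ :=
  if k = 0 then (2 * (m : ℝ) + 1) ^ n
  else if k ≤ n then 4 * m * (2 * (m : ℝ) - 1) ^ (k - 1) * (2 * (m : ℝ) + 1) ^ (n - k)
  else if m = 0 then 0 else (2 * (m : ℝ) - 1) ^ n

section pBCoeff

variable {n k : ℕ} (m : ℕ)

theorem pBCoeff_zero : pBCoeff n 0 m = (2 * m + 1) ^ n := by
  simp [pBCoeff]

theorem pBCoeff_of_pos_of_le (hk0 : 0 < k) (hk : k ≤ n) :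
    pBCoeff n k m = 4 * m * (2 * m - 1) ^ (k - 1) * (2 * m + 1) ^ (n - k) := by
  simp [pBCoeff, hk0.ne', hk]

theorem pBCoeff_succ_self : pBCoeff n (n + 1) m = if m = 0 then 0 else (2 * (m : ℝ) - 1) ^ n := by
  simp [pBCoeff]

theorem sum_range_pBCoeff (hk0 : 0 < k) (hk : k ≤ n + 1) :
    ∑ i ∈ Finset.range k, pBCoeff n i m =
      (2 * m + 1) ^ (n + 1) - 2 * m * (2 * m - 1) ^ (k - 1) * (2 * m + 1) ^ (n + 1 - k) := by
  induction k, hk0 using Nat.le_induction with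
  | base =>
    rw [Finset.sum_range_one, pBCoeff_zero, Nat.add_sub_cancel]
    ring
  | succ k hk0 ih =>
    obtain ⟨j, rfl⟩ := Nat.exists_eq_add_of_le' hk0
    obtain ⟨l, rfl⟩ := Nat.exists_eq_add_of_le (show j + 1 ≤ n by omega)
    rw [Finset.sum_range_succ, ih (by omega), pBCoeff_of_pos_of_le m hk0 (by omega),
      show j + 1 + l + 1 - (j + 1) = l + 1 by omega, show j + 1 + l + 1 - (j + 1 + 1) = l by omega,
      Nat.add_sub_cancel_left, Nat.add_sub_cancel, Nat.add_sub_cancel]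
    ring

theorem sum_range_add_two_pBCoeff :
    ∑ i ∈ Finset.range (n + 2), pBCoeff n i m =
      pBCoeff (n + 1) 0 m - pBCoeff (n + 1) (n + 2) m := by
  rw [Finset.sum_range_succ, sum_range_pBCoeff m (Nat.add_one_pos n) le_rfl, Nat.add_sub_cancel,
    Nat.sub_self, pBCoeff_succ_self, pBCoeff_succ_self, pBCoeff_zero]
  rcases m with _ | m
  · simp
  · simp only [Nat.add_one_ne_zero, if_false]
    ring

end pBCoeff

theorem coeff_succ_one_sub_X_mul_mk {R : Type*} [CommRing R] (f : ℕ → R) (m : ℕ) :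
    coeff (m + 1) ((1 - X) * mk f) = f (m + 1) - f m := by
  simp only [sub_mul, one_mul, map_sub, coeff_succ_X_mul, coeff_mk]

theorem one_sub_X_mul_mk_pBCoeff_succ_zero (n : ℕ) :
    (1 - X) * mk (pBCoeff (n + 1) 0) =
      mk fun m => ∑ i ∈ Finset.range (n + 2), pBCoeff n i m := by
  ext m
  rcases m with _ | m
  · simp [pBCoeff]
  · rw [coeff_succ_one_sub_X_mul_mk, coeff_mk, sum_range_add_two_pBCoeff, pBCoeff_zero,
      pBCoeff_zero, pBCoeff_succ_self, if_neg m.add_one_ne_zero]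
    push_cast
    ring

theorem one_sub_X_mul_mk_pBCoeff_succ_succ_self (n : ℕ) :
    (1 - X) * mk (pBCoeff (n + 1) (n + 2)) =
      X * mk fun m => ∑ i ∈ Finset.range (n + 2), pBCoeff n i m := by
  ext m
  rcases m with _ | m
  · simp [pBCoeff]
  · rw [coeff_succ_one_sub_X_mul_mk, coeff_succ_X_mul, coeff_mk, sum_range_add_two_pBCoeff,
      pBCoeff_succ_self, pBCoeff_succ_self, pBCoeff_zero]
    rcases m with _ | m <;> simp <;> ring

theorem one_sub_X_mul_mk_pBCoeff_succ_of_pos_of_le {n k : ℕ} (hk0 : 0 < k) (hk : k ≤ n + 1) :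
    (1 - X) * mk (pBCoeff (n + 1) k) =
      2 * X * mk (fun m => ∑ i ∈ Finset.range k, pBCoeff n i m) +
        2 * (mk (fun m => ∑ i ∈ Finset.range (n + 2), pBCoeff n i m) -
          mk (fun m => ∑ i ∈ Finset.range k, pBCoeff n i m)) := by
  rw [← map_ofNat C 2]
  ext m
  rcases m with _ | m
  · simp [pBCoeff, hk0.ne', hk0]
  · rw [coeff_succ_one_sub_X_mul_mk, mul_assoc]
    simp only [coeff_C_mul, map_add, map_sub, coeff_succ_X_mul, coeff_mk,
      sum_range_pBCoeff _ hk0 hk, sum_range_add_two_pBCoeff, pBCoeff_of_pos_of_le _ hk0 hk,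
      pBCoeff_zero, pBCoeff_succ_self, if_neg m.add_one_ne_zero]
    push_cast
    ring

theorem coe_pB_zero : ∀ k ≤ 1, (pB 0 k : PowerSeries ℝ) = (1 - X) * mk (pBCoeff 0 k) := by
  intro k hk
  interval_cases k
  · have hc : pBCoeff 0 0 = 1 := funext fun m => by rw [pBCoeff_zero, pow_zero, Pi.one_apply]
    rw [pB_zero_zero, Polynomial.coe_one, hc, mul_comm, mk_one_mul_one_sub_eq_one]
  · rw [pB_zero_one, Polynomial.coe_X]
    ext m
    rcases m with _ | m
    · simp [pBCoeff]
    · rw [coeff_succ_one_sub_X_mul_mk]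
      rcases m with _ | m <;> simp [pBCoeff_succ_self, coeff_X]

theorem coe_pB (n : ℕ) :
    ∀ k ≤ n + 1, (pB n k : PowerSeries ℝ) = (1 - X) ^ (n + 1) * mk (pBCoeff n k) := by
  induction n with
  | zero => simpa only [zero_add, pow_one] using coe_pB_zero
  | succ n ih =>
    have coe_sum : ∀ j ≤ n + 2,
        ((∑ i ∈ Finset.range j, pB n i : Polynomial ℝ) : PowerSeries ℝ) =
        (1 - X) ^ (n + 1) * mk (fun m => ∑ i ∈ Finset.range j, pBCoeff n i m) := by
      intro j hj
      calc ((∑ i ∈ Finset.range j, pB n i : Polynomial ℝ) : PowerSeries ℝ)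
          = ∑ i ∈ Finset.range j, (pB n i : PowerSeries ℝ) := by
            simp only [← Polynomial.coeToPowerSeries.ringHom_apply, map_sum]
        _ = ∑ i ∈ Finset.range j, (1 - X) ^ (n + 1) * mk (pBCoeff n i) :=
            Finset.sum_congr rfl fun i hi =>
              ih i (Nat.lt_succ_iff.mp ((Finset.mem_range.mp hi).trans_le hj))
        _ = _ := by
            rw [← Finset.mul_sum]
            congr 1
            ext m
            simp [map_sum]
    intro k hk
    rw [pow_succ, mul_assoc]
    obtain rfl | hk0 := Nat.eq_zero_or_pos k
    · rw [pB_succ_zero, coe_sum _ le_rfl, one_sub_X_mul_mk_pBCoeff_succ_zero]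
    obtain rfl | hk := eq_or_lt_of_le hk
    · have h := congrArg Polynomial.coeToPowerSeries.ringHom (pB_succ_succ_self n)
      simp only [map_mul, Polynomial.coeToPowerSeries.ringHom_apply, Polynomial.coe_X] at h
      rw [h, coe_sum _ le_rfl, one_sub_X_mul_mk_pBCoeff_succ_succ_self]
      ring
    · have h := congrArg Polynomial.coeToPowerSeries.ringHom
        (pB_succ_of_pos_of_le hk0 (Nat.lt_succ_iff.mp hk))
      simp only [map_mul, map_add, map_sub, map_ofNat, Polynomial.coeToPowerSeries.ringHom_apply,
        Polynomial.coe_X] at h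
      rw [h, coe_sum _ le_rfl, coe_sum _ hk.le,
        one_sub_X_mul_mk_pBCoeff_succ_of_pos_of_le hk0 (Nat.lt_succ_iff.mp hk)]
      ring

theorem pB_powerSeries_identity_general (n k : ℕ) (hk1 : 1 ≤ k) (hk2 : k ≤ n) :
    (pB n k : PowerSeries ℝ) =
      (1 - PowerSeries.X) ^ (n + 1) *
        PowerSeries.mk
          (fun m => (4 * m : ℝ) * (2 * m - 1) ^ (k - 1) * (2 * m + 1) ^ (n - k)) := by
  rw [coe_pB n k (by omega)]
  congr 2 with m
  exact pBCoeff_of_pos_of_le m hk1 hk2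

/-- Proposition (f), middle case: for `1 ≤ k ≤ n`,
`p^B_{n,k}(x) = (1-x)^{n+1} ⬝ ∑_{m ≥ 0} (4m)(2m-1)^{k-1}(2m+1)^{n-k} x^m` in `ℝ⟦x⟧`. -/
theorem pB_powerSeries_identity (n k : ℕ) (hn : 1 ≤ n) (hk1 : 1 ≤ k) (hk2 : k ≤ n) :
    (pB n k : PowerSeries ℝ) =
      (1 - PowerSeries.X) ^ (n + 1) *
        PowerSeries.mk
          (fun m => (4 * m : ℝ) * (2 * m - 1) ^ (k - 1) * (2 * m + 1) ^ (n - k)) :=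
  pB_powerSeries_identity_general n k hk1 hk2
end

section
/- Let n be a natural number and let f_0, …, f_n and h_0, …, h_{n+1} be real numbers satisfying the polynomial identity (1+x) · Σ_{k=0}^{n+1} h_k x^k = 1 + Σ_{k=0}^{n} f_k x^{k+1} ((1−x)/2)^{n−k} + h_{n+1} x^{n+2} in ℝ[x]. Then the polynomial identity Σ_{k=0}^{n} f_k (2y−1)^k = Σ_{k=0}^{n} (h_k + h_{k+1}) (2y−1)^k (2y+1)^{n−k} holds in ℝ[y] (equivalently, for all real y). -/
/-!
Multiplying out, `(1 + x) ∑_{k ≤ n+1} h_k x^k = h_0 + x ∑_{k ≤ n} (h_k + h_{k+1}) x^k + h_{n+1} x^{n+2}`,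
so the hypothesis says `h_0 = 1` and `∑_{k ≤ n} (h_k + h_{k+1}) x^k = ∑_{k ≤ n} f_k x^k ((1-x)/2)^{n-k}`
as polynomials of degree at most `n`. Homogenizing this identity in degree `n` and substituting
`(x, 1) ↦ (2y - 1, 2y + 1)` turns `(1 - x)/2` into `1`, which is the claim.
-/

open Polynomial Finset

theorem one_add_mul_sum_range_succ {R : Type*} [CommSemiring R] (x : R) (c : ℕ → R) (m : ℕ) :
    (1 + x) * ∑ k ∈ range (m + 1), c k * x ^ k =
      c 0 + x * ∑ k ∈ range m, (c k + c (k + 1)) * x ^ k + c m * x ^ (m + 1) := by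
  induction m with
  | zero => simp; ring
  | succ m ih => rw [sum_range_succ, mul_add, ih, sum_range_succ]; ring

namespace Polynomial

variable {R : Type*} [CommSemiring R]

theorem homogenize_pow (p : R[X]) {d : ℕ} (hp : p.natDegree ≤ d) (m : ℕ) :
    homogenize (p ^ m) (m * d) = homogenize p d ^ m := by
  simpa using homogenize_finsetProd (s := range m) (p := fun _ ↦ p) (n := fun _ ↦ d)
    fun _ _ ↦ hp

theorem homogenize_sum_C_mul_X_pow_mul_pow (c : ℕ → R) (u : R[X]) (hu : u.natDegree ≤ 1)
    (n : ℕ) :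
    homogenize (∑ k ∈ range (n + 1), C (c k) * X ^ k * u ^ (n - k)) n =
      ∑ k ∈ range (n + 1), .C (c k) * .X 0 ^ k * homogenize u 1 ^ (n - k) := by
  rw [homogenize_finsetSum]
  refine sum_congr rfl fun k hk ↦ ?_
  have hmul := homogenize_mul (X ^ k) (u ^ (n - k)) (natDegree_X_pow_le k)
    (natDegree_pow_le_of_le (n - k) hu)
  rw [homogenize_X_pow le_rfl, homogenize_pow u hu, Nat.sub_self, pow_zero] at hmul
  simp only [mul_one, Nat.add_sub_cancel' (mem_range_succ_iff.mp hk)] at hmul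
  rw [mul_assoc, homogenize_C_mul, hmul, mul_assoc]

end Polynomial

/-- If `(1+x) ∑_{k=0}^{n+1} h_k x^k = 1 + ∑_{k=0}^n f_k x^{k+1} ((1-x)/2)^{n-k} + h_{n+1} x^{n+2}`
in `ℝ[x]` (the defining equation of the normalized cubical `h`-vector), then
`∑_{k=0}^n f_k (2y-1)^k = ∑_{k=0}^n (h_k + h_{k+1}) (2y-1)^k (2y+1)^{n-k}` in `ℝ[y]`. -/
theorem cubical_h_identity (n : ℕ) (f h : ℕ → ℝ)
    (hdef : (1 + Polynomial.X) * ∑ k ∈ Finset.range (n + 2), Polynomial.C (h k) * Polynomial.X ^ k =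
      1 + (∑ k ∈ Finset.range (n + 1), Polynomial.C (f k) * Polynomial.X ^ (k + 1) *
            (Polynomial.C (1 / 2 : ℝ) * (1 - Polynomial.X)) ^ (n - k)) +
        Polynomial.C (h (n + 1)) * Polynomial.X ^ (n + 2)) :
    ∑ k ∈ Finset.range (n + 1), Polynomial.C (f k) * (2 * Polynomial.X - 1) ^ k =
      ∑ k ∈ Finset.range (n + 1), Polynomial.C (h k + h (k + 1)) *
        (2 * Polynomial.X - 1) ^ k * (2 * Polynomial.X + 1) ^ (n - k) := by
  set u : ℝ[X] := C (1 / 2 : ℝ) * (1 - X)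
  set G : ℝ[X] := ∑ k ∈ range (n + 1), C (h k + h (k + 1)) * X ^ k * 1 ^ (n - k)
  set F : ℝ[X] := ∑ k ∈ range (n + 1), C (f k) * X ^ k * u ^ (n - k)
  have hGF_shifted : C (h 0) + X * G = 1 + X * F := by
    have hF : ∑ k ∈ range (n + 1), C (f k) * X ^ (k + 1) * u ^ (n - k) = X * F := by
      rw [mul_sum]
      exact sum_congr rfl fun k _ ↦ by ring
    rw [one_add_mul_sum_range_succ, hF] at hdef
    simpa [G] using hdef
  have h0 : h 0 = 1 := by simpa using congrArg (coeff · 0) hGF_shifted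
  have hGF : G = F := mul_left_cancel₀ X_ne_zero (by simpa [h0] using hGF_shifted)
  set v : Fin 2 → ℝ[X] := ![2 * X - 1, 2 * X + 1]
  have hu : MvPolynomial.aeval v (homogenize u 1) = 1 := by
    simp [u, v, one_add_one_eq_two, ← C_ofNat, ← C_mul]
  have hGF_hom := congrArg (fun p ↦ MvPolynomial.aeval v (homogenize p n)) hGF
  simp only [G, F, homogenize_sum_C_mul_X_pow_mul_pow _ _ (natDegree_one.trans_le zero_le_one),
    homogenize_sum_C_mul_X_pow_mul_pow _ u (by unfold u; compute_degree)] at hGF_hom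
  simpa [v, hu] using hGF_hom.symm
end

section
/- Let n be a natural number and let f_0, …, f_n and h_0, …, h_{n+1} be real numbers. Then the polynomial identity (1+x) · Σ_{k=0}^{n+1} h_k x^k = 1 + Σ_{k=0}^{n} f_k x^{k+1} ((1−x)/2)^{n−k} + h_{n+1} x^{n+2} holds in ℝ[x] if and only if h_0 = 1 and the polynomial identity Σ_{k=0}^{n} f_k x^k = Σ_{k=0}^{n} (h_k + h_{k+1}) x^k (x+2)^{n−k} holds in ℝ[x]. -/
/-!
Write `P(x, y) = ∑ f_k x^k y^(n-k)` and `Q(x, y) = ∑ (h_k + h_{k+1}) x^k y^(n-k)` for the binary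
forms of degree `n`. Cancelling `1 + x` against the telescoping sum and comparing constant terms,
the defining equation says `h_0 = 1` and `Q(x, 1) = P(x, (1 - x)/2)`, while the second identity
says `P(t, 1) = Q(t, t + 2)`. Under the Möbius substitution `x = t / (t + 2)` the pairs `(t, 1)` and
`(t, t + 2)` are `t + 2` times `(x, (1 - x)/2)` and `(x, 1)`, so by homogeneity the two identities
agree at all but one point, hence as polynomials.
-/

open Polynomial PowerSeries

namespace Polynomial

theorem C_add_X_mul_inj {R : Type*} [CommRing R] {a b : R} {p q : R[X]} :
    C a + X * p = C b + X * q ↔ a = b ∧ p = q := by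
  refine ⟨fun H => ?_, fun ⟨hab, hpq⟩ => hab ▸ hpq ▸ rfl⟩
  have hab : a = b := by simpa using congrArg (coeff · 0) H
  subst hab
  exact ⟨rfl, isRegular_X.left (add_left_cancel H)⟩

theorem one_add_X_mul_sum {R : Type*} [CommSemiring R] (a : ℕ → R) (m : ℕ) :
    (1 + X) * ∑ k ∈ Finset.range (m + 1), C (a k) * X ^ k =
      C (a 0) + X * ∑ k ∈ Finset.range m, C (a k + a (k + 1)) * X ^ k + C (a m) * X ^ (m + 1) := by
  induction m with
  | zero => simp only [zero_add, Finset.sum_range_one, Finset.sum_range_zero]; ring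
  | succ m ih =>
    rw [Finset.sum_range_succ, mul_add, ih, Finset.sum_range_succ, C_add]
    ring

theorem eq_of_eval_eq_of_ne {K : Type*} [Field K] [Infinite K] {p q : K[X]} (a : K)
    (h : ∀ t, t ≠ a → p.eval t = q.eval t) : p = q :=
  eq_of_infinite_eval_eq p q <| ((Set.finite_singleton a).infinite_compl).mono fun t ht => h t ht

end Polynomial

section

variable {R : Type*} [CommSemiring R]

def homForm (n : ℕ) (a : ℕ → R) (x y : R) : R :=
  ∑ k ∈ Finset.range (n + 1), a k * x ^ k * y ^ (n - k)

theorem homForm_mul_mul (n : ℕ) (a : ℕ → R) (c x y : R) :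
    homForm n a (c * x) (c * y) = c ^ n * homForm n a x y := by
  rw [homForm, homForm, Finset.mul_sum]
  refine Finset.sum_congr rfl fun k hk => ?_
  obtain ⟨m, rfl⟩ := Nat.exists_eq_add_of_le (Nat.lt_succ_iff.mp (Finset.mem_range.mp hk))
  rw [Nat.add_sub_cancel_left, mul_pow, mul_pow, pow_add]
  ring

theorem Polynomial.eval_sum_C_mul_X_pow_mul_pow (n : ℕ) (a : ℕ → R) (p : R[X]) (t : R) :
    (∑ k ∈ Finset.range (n + 1), C (a k) * X ^ k * p ^ (n - k)).eval t =
      homForm n a t (p.eval t) := by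
  simp [homForm, eval_finsetSum]

theorem Polynomial.eval_sum_C_mul_X_pow (n : ℕ) (a : ℕ → R) (t : R) :
    (∑ k ∈ Finset.range (n + 1), C (a k) * X ^ k).eval t = homForm n a t 1 := by
  simp [homForm, eval_finsetSum]

end

section

variable {K : Type*} [Field K]

theorem homForm_eq_iff_of_mul_add_two_eq [NeZero (2 : K)] {F G : ℕ → K} (n : ℕ) {x t : K}
    (hxt : x * (t + 2) = t) (ht : t + 2 ≠ 0) :
    homForm n G x 1 = homForm n F x (1 / 2 * (1 - x)) ↔
      homForm n F t 1 = homForm n G t (t + 2) := by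
  have hF : homForm n F t 1 = (t + 2) ^ n * homForm n F x (1 / 2 * (1 - x)) := by
    rw [← homForm_mul_mul]
    congr 1
    · exact hxt.symm.trans (mul_comm _ _)
    · field_simp
      linear_combination hxt
  have hG : homForm n G t (t + 2) = (t + 2) ^ n * homForm n G x 1 := by
    rw [← homForm_mul_mul, mul_one, mul_comm, hxt]
  rw [hF, hG, mul_right_inj' (pow_ne_zero n ht), eq_comm]

theorem Polynomial.sum_C_mul_X_pow_eq_iff [CharZero K] (n : ℕ) (F G : ℕ → K) :
    ∑ k ∈ Finset.range (n + 1), C (G k) * X ^ k =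
        ∑ k ∈ Finset.range (n + 1), C (F k) * X ^ k * (C (1 / 2 : K) * (1 - X)) ^ (n - k) ↔
      ∑ k ∈ Finset.range (n + 1), C (F k) * X ^ k =
        ∑ k ∈ Finset.range (n + 1), C (G k) * X ^ k * (X + 2) ^ (n - k) := by
  constructor
  · refine fun H => eq_of_eval_eq_of_ne (-2) fun t ht2 => ?_
    have ht : t + 2 ≠ 0 := fun h => ht2 (eq_neg_of_add_eq_zero_left h)
    have H_eval := congrArg (eval (t / (t + 2))) H
    simp only [eval_sum_C_mul_X_pow, eval_sum_C_mul_X_pow_mul_pow, eval_mul, eval_C, eval_sub,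
      eval_one, eval_X, eval_add, eval_ofNat] at H_eval ⊢
    exact (homForm_eq_iff_of_mul_add_two_eq n (div_mul_cancel₀ t ht) ht).1 H_eval
  · refine fun H => eq_of_eval_eq_of_ne 1 fun x hx1 => ?_
    have hx : 1 - x ≠ 0 := sub_ne_zero.2 hx1.symm
    have H_eval := congrArg (eval (2 * x / (1 - x))) H
    simp only [eval_sum_C_mul_X_pow, eval_sum_C_mul_X_pow_mul_pow, eval_mul, eval_C, eval_sub,
      eval_one, eval_X, eval_add, eval_ofNat] at H_eval ⊢
    have ht_add_two : 2 * x / (1 - x) + 2 = 2 / (1 - x) := by field_simp; ring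
    refine (homForm_eq_iff_of_mul_add_two_eq n ?_ ?_).2 H_eval
    · rw [ht_add_two, mul_div_assoc', mul_comm]
    · rw [ht_add_two]
      exact div_ne_zero two_ne_zero hx

end

/-- The defining equation of the normalized cubical `h`-vector,
`(1+x) ∑_{k=0}^{n+1} h_k x^k = 1 + ∑_{k=0}^n f_k x^{k+1} ((1-x)/2)^{n-k} + h_{n+1} x^{n+2}`,
holds in `ℝ[x]` if and only if `h_0 = 1` and
`∑_{k=0}^n f_k x^k = ∑_{k=0}^n (h_k + h_{k+1}) x^k (x+2)^{n-k}` holds in `ℝ[x]`. -/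
theorem cubical_h_equivalent_definition (n : ℕ) (f h : ℕ → ℝ) :
    ((1 + Polynomial.X) * ∑ k ∈ Finset.range (n + 2), Polynomial.C (h k) * Polynomial.X ^ k =
      1 + (∑ k ∈ Finset.range (n + 1), Polynomial.C (f k) * Polynomial.X ^ (k + 1) *
            (Polynomial.C (1 / 2 : ℝ) * (1 - Polynomial.X)) ^ (n - k)) +
        Polynomial.C (h (n + 1)) * Polynomial.X ^ (n + 2)) ↔
      (h 0 = 1 ∧
        ∑ k ∈ Finset.range (n + 1), Polynomial.C (f k) * Polynomial.X ^ k =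
          ∑ k ∈ Finset.range (n + 1), Polynomial.C (h k + h (k + 1)) *
            Polynomial.X ^ k * (Polynomial.X + 2) ^ (n - k)) := by
  have h_factor_X : ∑ k ∈ Finset.range (n + 1), Polynomial.C (f k) * Polynomial.X ^ (k + 1) *
      (Polynomial.C (1 / 2 : ℝ) * (1 - Polynomial.X)) ^ (n - k) =
      Polynomial.X * ∑ k ∈ Finset.range (n + 1), Polynomial.C (f k) * Polynomial.X ^ k *
      (Polynomial.C (1 / 2 : ℝ) * (1 - Polynomial.X)) ^ (n - k) := by
    rw [Finset.mul_sum]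
    exact Finset.sum_congr rfl fun k _ => by ring
  rw [Polynomial.one_add_X_mul_sum, h_factor_X, add_left_inj, ← Polynomial.C_1,
    Polynomial.C_add_X_mul_inj, Polynomial.C_1, Polynomial.sum_C_mul_X_pow_eq_iff]
end
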